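/- Consider the personalized bi-valued instance with two agents and four goods g_1, g_2, g_3, g_4, where agent 1's values for (g_1, g_2, g_3, g_4) are (6, 6, 1, 1) and agent 2's values are (3, 3, 1, 1), with additive utilities. Then no allocation of this instance is both EFX and fractionally Pareto-optimal. -/

import Mathlib

open Finset

/-- Additive utility of a bundle: the sum of the values of the single goods in it. -/
def util (u : Fin 2 → Fin 4 → ℝ) (i : Fin 2) (S : Finset (Fin 4)) : ℝ :=
  ∑ g ∈ S, u i g

/-- `X` is an allocation: a partition of the four goods into two (possibly empty) bundles. -/
def IsAllocation (X : Fin 2 → Finset (Fin 4)) : Prop :=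
  (∀ g : Fin 4, ∃ i, g ∈ X i) ∧ ∀ i j : Fin 2, i ≠ j → Disjoint (X i) (X j)

/-- `X` is EFX w.r.t. utilities `u`. -/
def IsEFX (u : Fin 2 → Fin 4 → ℝ) (X : Fin 2 → Finset (Fin 4)) : Prop :=
  ∀ i j : Fin 2, ∀ g ∈ X j, util u i ((X j).erase g) ≤ util u i (X i)

/-- `z` is a fractional allocation: each agent `i` gets a share `z i g ∈ [0, 1]` of each
good `g`, and the shares of each good sum to `1`. -/
def IsFracAllocation (z : Fin 2 → Fin 4 → ℝ) : Prop :=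
  (∀ i g, 0 ≤ z i g ∧ z i g ≤ 1) ∧ ∀ g, ∑ i, z i g = 1

/-- Agent `i`'s utility under the fractional allocation `z`. -/
def fracUtil (u : Fin 2 → Fin 4 → ℝ) (z : Fin 2 → Fin 4 → ℝ) (i : Fin 2) : ℝ :=
  ∑ g, z i g * u i g

/-- `X` is fractionally Pareto-optimal: no fractional allocation gives every agent at
least her utility in `X` and some agent strictly more. -/
def IsFPO (u : Fin 2 → Fin 4 → ℝ) (X : Fin 2 → Finset (Fin 4)) : Prop :=
  ¬ ∃ z : Fin 2 → Fin 4 → ℝ, IsFracAllocation z ∧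
    (∀ i, util u i (X i) ≤ fracUtil u z i) ∧ ∃ j, util u j (X j) < fracUtil u z j

/-- Agent 1's values for the goods `(g₁, g₂, g₃, g₄)` are `(6, 6, 1, 1)` and agent 2's
values are `(3, 3, 1, 1)`. -/
def uFPO : Fin 2 → Fin 4 → ℝ := ![![6, 6, 1, 1], ![3, 3, 1, 1]]

/-!
EFX forces each agent to receive exactly one of the big goods `g₁, g₂` and one of the small
goods `g₃, g₄`: an agent without a big good envies the other even after a good is removed, and
so does agent 1 (resp. 2) when agent 2 (resp. 1) holds both small goods. Every EFX allocation
therefore gives utilities `(7, 4)`, which is Pareto-dominated by the fractional allocation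
giving agent 1 all of `g₁` and a third of `g₂`, worth `(8, 4)`.
-/

lemma IsAllocation.eq_compl {X : Fin 2 → Finset (Fin 4)} (hX : IsAllocation X) :
    X 1 = (X 0)ᶜ := by
  ext g
  rw [mem_compl]
  constructor
  · exact fun h1 h0 => disjoint_left.mp (hX.2 0 1 (by decide)) h0 h1
  · intro h0
    obtain ⟨i, hi⟩ := hX.1 g
    fin_cases i
    exacts [absurd hi h0, hi]

/-- The values of `uFPO` as natural numbers, so that the EFX condition on all sixteen splits
becomes decidable. -/
def valsNat : Fin 2 → Fin 4 → ℕ := ![![6, 6, 1, 1], ![3, 3, 1, 1]]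

lemma util_uFPO (i : Fin 2) (S : Finset (Fin 4)) :
    util uFPO i S = ((∑ g ∈ S, valsNat i g : ℕ) : ℝ) := by
  have hvals : uFPO i = fun g => (valsNat i g : ℝ) := by
    ext g
    fin_cases i <;> fin_cases g <;> simp [uFPO, valsNat]
  rw [util, hvals, Nat.cast_sum]

lemma sum_valsNat_eq_of_efx : ∀ S : Finset (Fin 4),
    (∀ g ∈ Sᶜ, ∑ x ∈ Sᶜ.erase g, valsNat 0 x ≤ ∑ x ∈ S, valsNat 0 x) →
    (∀ g ∈ S, ∑ x ∈ S.erase g, valsNat 1 x ≤ ∑ x ∈ Sᶜ, valsNat 1 x) →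
    ∑ x ∈ S, valsNat 0 x = 7 ∧ ∑ x ∈ Sᶜ, valsNat 1 x = 4 := by
  decide

lemma IsEFX.util_uFPO_eq {X : Fin 2 → Finset (Fin 4)} (hefx : IsEFX uFPO X)
    (hX : IsAllocation X) : util uFPO 0 (X 0) = 7 ∧ util uFPO 1 (X 1) = 4 := by
  have hefx0 := hefx 0 1
  have hefx1 := hefx 1 0
  rw [hX.eq_compl] at hefx0 hefx1 ⊢
  simp only [util_uFPO, Nat.cast_le] at hefx0 hefx1 ⊢
  exact_mod_cast sum_valsNat_eq_of_efx (X 0) hefx0 hefx1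

lemma not_isFPO_uFPO_of_util_le {X : Fin 2 → Finset (Fin 4)}
    (h0 : util uFPO 0 (X 0) ≤ 7) (h1 : util uFPO 1 (X 1) ≤ 4) : ¬ IsFPO uFPO X := by
  let z : Fin 2 → Fin 4 → ℝ := ![![1, 1/3, 0, 0], ![0, 2/3, 1, 1]]
  have hz : IsFracAllocation z := by
    constructor
    · intro i g
      fin_cases i <;> fin_cases g <;> norm_num [z]
    · intro g
      fin_cases g <;> norm_num [z, Fin.sum_univ_two]
  have hz0 : fracUtil uFPO z 0 = 8 := by
    norm_num [z, fracUtil, Fin.sum_univ_four, uFPO, Matrix.cons_val_two, Matrix.cons_val_three]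
  have hz1 : fracUtil uFPO z 1 = 4 := by
    norm_num [z, fracUtil, Fin.sum_univ_four, uFPO, Matrix.cons_val_two, Matrix.cons_val_three]
  exact fun hfpo =>
    hfpo ⟨z, hz, Fin.forall_fin_two.2 ⟨by linarith, by linarith⟩, 0, by linarith⟩

/-- In the instance where agent 1's values are `(6, 6, 1, 1)` and agent 2's
values are `(3, 3, 1, 1)`, no allocation is both EFX and fractionally Pareto-optimal. -/
theorem no_efx_and_fpo :
    ¬ ∃ X : Fin 2 → Finset (Fin 4), IsAllocation X ∧ IsEFX uFPO X ∧ IsFPO uFPO X := by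
  rintro ⟨X, hX, hefx, hfpo⟩
  obtain ⟨h0, h1⟩ := hefx.util_uFPO_eq hX
  exact not_isFPO_uFPO_of_util_le h0.le h1.le hfpo
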